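/- arXiv:2303.02453 — 5 statements merged into one kernel-verified Lean document; each statement's English description precedes it below -/
import Mathlib

section
/- Let X be a scheme and let D₁, D₂, E be effective Cartier divisors on X such that E ≤ D₁ and E ≤ D₂. Then E equals the scheme-theoretic intersection D₁ ×_X D₂ if and only if the supports of D₁ − E and D₂ − E are disjoint. -/
/-!
Statement 0 (Lemma `key-lem`): Let `X` be a scheme and `D₁, D₂, E` effective Cartier
divisors with `E ≤ D₁`, `E ≤ D₂`.  Then `E = D₁ ×_X D₂` iff `|D₁ - E| ∩ |D₂ - E| = ∅`.

We formalize the affine, locally principal model (the statement is local):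
`X = Spec R`, the effective Cartier divisor `Dᵢ` is cut out by the non-zero-divisor `dᵢ`,
`E` by the non-zero-divisor `e`, and `E ≤ Dᵢ` means `dᵢ = e * aᵢ` (so `Dᵢ - E` is cut out
by `aᵢ`).  The scheme-theoretic intersection `D₁ ×_X D₂` has ideal `(d₁) + (d₂)`, and
`E = D₁ ×_X D₂` means `(e) = (d₁) + (d₂)`.  Disjointness of the supports of `D₁ - E` and
`D₂ - E` is the disjointness of the zero loci of `a₁` and `a₂` in `Spec R`.
-/

theorem statement0 {R : Type*} [CommRing R] (d₁ d₂ e a₁ a₂ : R)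
    (he : e ∈ nonZeroDivisors R)
    (hd₁ : d₁ ∈ nonZeroDivisors R) (hd₂ : d₂ ∈ nonZeroDivisors R)
    (h₁ : d₁ = e * a₁) (h₂ : d₂ = e * a₂) :
    Ideal.span {e} = Ideal.span {d₁} + Ideal.span {d₂} ↔
      PrimeSpectrum.zeroLocus {a₁} ∩ PrimeSpectrum.zeroLocus {a₂} = ∅ := by
  have hpair : Ideal.span {d₁} + Ideal.span {d₂} = Ideal.span ({d₁, d₂} : Set R) := by
    rw [Ideal.add_eq_sup, ← Ideal.span_union, Set.singleton_union]
  have hsub : Ideal.span ({d₁, d₂} : Set R) ≤ Ideal.span {e} := by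
    rw [Ideal.span_le]
    rintro x hx
    rcases hx with rfl | hx
    · exact h₁ ▸ Ideal.mul_mem_right _ _ (Ideal.mem_span_singleton_self e)
    · rw [Set.mem_singleton_iff] at hx
      subst hx
      exact h₂ ▸ Ideal.mul_mem_right _ _ (Ideal.mem_span_singleton_self e)
  have hzl : PrimeSpectrum.zeroLocus {a₁} ∩ PrimeSpectrum.zeroLocus {a₂}
      = PrimeSpectrum.zeroLocus (Ideal.span ({a₁, a₂} : Set R) : Set R) := by
    rw [← PrimeSpectrum.zeroLocus_union, Set.singleton_union, PrimeSpectrum.zeroLocus_span]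
  rw [hpair, hzl, PrimeSpectrum.zeroLocus_empty_iff_eq_top]
  constructor
  · intro h
    rw [Ideal.eq_top_iff_one]
    have : e ∈ Ideal.span ({d₁, d₂} : Set R) := h ▸ Ideal.mem_span_singleton_self e
    rw [Ideal.mem_span_pair] at this
    obtain ⟨m, n, hmn⟩ := this
    rw [h₁, h₂] at hmn
    have : e * (m * a₁ + n * a₂) = e * 1 := by ring_nf; ring_nf at hmn; linear_combination hmn
    have h1 : m * a₁ + n * a₂ = 1 := by
      have := (mul_cancel_right_mem_nonZeroDivisors he).mp
        (show (m * a₁ + n * a₂) * e = 1 * e by linear_combination hmn)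
      exact this
    rw [Ideal.mem_span_pair]
    exact ⟨m, n, h1⟩
  · intro h
    apply le_antisymm _ hsub
    rw [Ideal.span_singleton_le_iff_mem]
    rw [Ideal.eq_top_iff_one, Ideal.mem_span_pair] at h
    obtain ⟨m, n, hmn⟩ := h
    rw [Ideal.mem_span_pair]
    exact ⟨m, n, by rw [h₁, h₂]; ring_nf; linear_combination e * hmn⟩
end

section
/- Let X be a scheme, and let D₁, D₂, E be effective Cartier divisors on X with E ≤ D₁, E ≤ D₂. Denote by I_V the ideal sheaf of a closed subscheme V. Then I_Z · I_E = I_{D₁×_X D₂}, where Z is the closed subscheme (D₁ − E) ×_X (D₂ − E) and D₁ ×_X D₂ is the closed subscheme with ideal sheaf I_{D₁} + I_{D₂}. -/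
/-!
Statement 1 (equation `eq-interpret` in Lemma `key-lem`): with `D₁, D₂, E` effective
Cartier divisors, `E ≤ Dᵢ`, one has `I_Z · I_E = I_{D₁ ×_X D₂}` where
`Z = (D₁ - E) ×_X (D₂ - E)`.

Affine, locally principal model: `Dᵢ` is cut out by the non-zero-divisor `dᵢ = e * aᵢ`,
`E` by the non-zero-divisor `e`; then `I_{Dᵢ - E} = (aᵢ)`,
`I_Z = I_{D₁-E} + I_{D₂-E} = (a₁, a₂)`, `I_{D₁ ×_X D₂} = I_{D₁} + I_{D₂} = (d₁, d₂)`,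
and the claim reads `(a₁, a₂) · (e) = (d₁, d₂)`.
-/

theorem statement1 {R : Type*} [CommRing R] (d₁ d₂ e a₁ a₂ : R)
    (he : e ∈ nonZeroDivisors R)
    (hd₁ : d₁ ∈ nonZeroDivisors R) (hd₂ : d₂ ∈ nonZeroDivisors R)
    (h₁ : d₁ = e * a₁) (h₂ : d₂ = e * a₂) :
    (Ideal.span {a₁, a₂} : Ideal R) * Ideal.span {e} = Ideal.span {d₁, d₂} := by
  subst h₁ h₂
  rw [show ({a₁, a₂} : Set R) = insert a₁ {a₂} from rfl, Ideal.span_insert,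
    Ideal.sup_mul, Ideal.span_singleton_mul_span_singleton,
    Ideal.span_singleton_mul_span_singleton, ← Ideal.span_insert]
  simp [mul_comm]
end

section
/- Let f : Y → X be a proper surjective morphism of integral schemes with X normal. Then the natural map from Cartier divisors on X to Cartier divisors on Y (given by pullback) is injective; equivalently, a Cartier divisor D on X is trivial if and only if f*D is trivial on Y. -/
open AlgebraicGeometry CategoryTheory TopologicalSpace Opposite

/-!
Statement 4: `f : Y → X` proper surjective between integral schemes with `X` normal;
then pullback of Cartier divisors along `f` is injective; equivalently, a Cartier
divisor `D` on `X` is trivial iff `f*D` is trivial on `Y`.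

On an integral scheme a Cartier divisor is given by local equations in the function
field; it is trivial iff the local equation is a unit of the local ring at every
point; the pullback along the dominant morphism `f` has local equation the image
under the induced field map `K(X) → K(Y)`.  Normality of `X` is expressed by all
local rings being integrally closed domains.
-/

namespace Statement4

noncomputable section

variable (X : Scheme) [IrreducibleSpace X]

/-- `g ∈ K(X)` is a unit at `x`, i.e. lies in the image of `O_{X,x}` as a unit. -/
def IsUnitAt (x : X) (g : X.functionField) : Prop :=
  ∃ u : (X.presheaf.stalk x)ˣ, algebraMap (X.presheaf.stalk x) X.functionField u = g

/-- A Cartier divisor on an irreducible (integral) scheme, given by local equations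
in the function field. -/
structure CartierDiv where
  eqn : X → X.functionFieldˣ
  isLocal : ∀ x : X, ∃ U : X.Opens, x ∈ U ∧
    ∀ y ∈ U, IsUnitAt X y ((eqn x : X.functionField) * ((eqn y)⁻¹ : X.functionFieldˣ))

/-- A Cartier divisor is trivial if its local equation is a unit of the local ring at
every point (i.e. its support is empty). -/
def CartierDiv.IsTrivial (D : CartierDiv X) : Prop := ∀ x : X, IsUnitAt X x (D.eqn x)

variable {X} {Y : Scheme} [IrreducibleSpace Y]

/-- The induced map on function fields of a morphism sending the generic point to the
generic point (e.g. any dominant morphism of integral schemes). -/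
def ffMap (f : Y ⟶ X) (hg : f.base (genericPoint Y) = genericPoint X) :
    X.functionField ⟶ Y.functionField :=
  (X.presheaf.stalkCongr (Inseparable.of_eq hg.symm)).hom ≫ f.stalkMap (genericPoint Y)

/-- The pullback `f*D` is trivial if its local equation is a unit of the local ring of
`Y` at every point. -/
def PullbackIsTrivial (f : Y ⟶ X) (hg : f.base (genericPoint Y) = genericPoint X)
    (D : CartierDiv X) : Prop :=
  ∀ y : Y, IsUnitAt Y y (ffMap f hg (D.eqn (f.base y) : X.functionField))

/-!
Pulling back a trivial divisor gives a trivial divisor because stalk maps send units to units.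
Conversely, apply the following to the local equation of `D` at `x` and to its inverse: a rational
function `h` on `X` whose image in `K(Y)` is regular at every point of the fibre over `x` is regular
at `x`. Indeed, `𝒪_{X,x}` is integrally closed, hence the intersection of the valuation rings of
`K(X)` dominating it. Each of these is cut out of a valuation ring `V` of `K(Y)`, and the valuative
criterion for the universally closed `f` gives a point `y` over `x` with `𝒪_{Y,y} ⊆ V`, so `h ∈ V`.
-/

theorem _root_.LocalSubring.map_mono {K L : Type*} [Field K] [Field L] (φ : K →+* L)
    {A B : LocalSubring K} (h : A ≤ B) : A.map φ ≤ B.map φ := by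
  refine ⟨fun _ ⟨a, ha, e⟩ ↦ ⟨a, h.1 ha, e⟩, ⟨?_⟩⟩
  rintro ⟨_, a, ha, rfl⟩ hunit
  obtain ⟨⟨_, b, hb, rfl⟩, hab⟩ := isUnit_iff_exists_inv.mp hunit
  have hab : a * b = 1 := φ.injective (by simpa using congrArg Subtype.val hab)
  have : IsUnit (Subring.inclusion h.1 ⟨a, ha⟩) :=
    isUnit_iff_exists_inv.mpr ⟨⟨b, hb⟩, Subtype.ext hab⟩
  obtain ⟨⟨c, hc⟩, hac⟩ := isUnit_iff_exists_inv.mp (h.2.1 _ this)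
  exact isUnit_iff_exists_inv.mpr ⟨⟨φ c, c, hc, rfl⟩,
    Subtype.ext (by simpa [← map_mul] using congrArg (φ ∘ Subtype.val) hac)⟩

theorem _root_.LocalSubring.range_comp {R K L : Type*} [CommRing R] [IsLocalRing R] [Field K]
    [Field L] (f : R →+* K) (φ : K →+* L) :
    LocalSubring.range (φ.comp f) = (LocalSubring.range f).map φ := by
  apply LocalSubring.toSubring_injective
  ext x
  change x ∈ Set.range (φ ∘ f) ↔ x ∈ φ '' Set.range f
  rw [Set.range_comp]

theorem _root_.ValuationSubring.comap_eq_of_map_le {K L : Type*} [Field K] [Field L]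
    {φ : K →+* L} {W : ValuationSubring K} {V : ValuationSubring L}
    (h : W.toLocalSubring.map φ ≤ V.toLocalSubring) : V.comap φ = W := by
  refine le_antisymm (fun x hx ↦ ?_) (fun x hx ↦ h.1 ⟨x, hx, rfl⟩)
  by_contra hxW
  have hx0 : x ≠ 0 := by rintro rfl; exact hxW W.zero_mem
  have hinv : x⁻¹ ∈ W := (W.mem_or_inv_mem x).resolve_left hxW
  have hunit : IsUnit (Subring.inclusion h.1 ⟨φ x⁻¹, x⁻¹, hinv, rfl⟩) :=
    isUnit_iff_exists_inv.mpr ⟨⟨φ x, hx⟩, Subtype.ext (by simp [hx0])⟩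
  obtain ⟨⟨_, z, hz, rfl⟩, hzx⟩ := isUnit_iff_exists_inv.mp (h.2.1 _ hunit)
  have : z = x := by
    have := congrArg Subtype.val hzx
    simp only [Subring.coe_mul, Subring.coe_one, ← map_mul, map_eq_one_iff _ φ.injective] at this
    exact (eq_inv_of_mul_eq_one_right this).trans (inv_inv x)
  exact hxW (this ▸ hz)

theorem _root_.ValuationSubring.exists_map_le_comap_eq {K L : Type*} [Field K] [Field L]
    (φ : K →+* L) (W : ValuationSubring K) :
    ∃ V : ValuationSubring L, W.toLocalSubring.map φ ≤ V.toLocalSubring ∧ V.comap φ = W :=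
  have ⟨V, hV⟩ := (W.toLocalSubring.map φ).exists_le_valuationSubring
  ⟨V, hV, ValuationSubring.comap_eq_of_map_le hV⟩

instance _root_.isIntegrallyClosedIn_range_algebraMap {R K : Type*} [CommRing R]
    [IsIntegrallyClosed R] [Field K] [Algebra R K] [IsFractionRing R K] :
    IsIntegrallyClosedIn (algebraMap R K).range K := by
  rw [Subring.isIntegrallyClosedIn_iff]
  intro x hx
  have hx' : IsIntegral (⊥ : Subalgebra R K) x := hx
  obtain ⟨y, rfl⟩ := IsIntegrallyClosed.isIntegral_iff.mp (isIntegral_trans (R := R) x hx')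
  exact ⟨y, rfl⟩

theorem _root_.mem_range_algebraMap_of_forall_valuationSubring {R K L : Type*} [CommRing R]
    [IsLocalRing R] [IsIntegrallyClosed R] [Field K] [Field L] [Algebra R K] [IsFractionRing R K]
    (φ : K →+* L) {g : K}
    (hg : ∀ V : ValuationSubring L,
      LocalSubring.range (φ.comp (algebraMap R K)) ≤ V.toLocalSubring → φ g ∈ V) :
    g ∈ (algebraMap R K).range := by
  have : IsIntegrallyClosedIn (LocalSubring.range (algebraMap R K)).toSubring K :=
    inferInstanceAs (IsIntegrallyClosedIn (algebraMap R K).range K)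
  by_contra hgR
  obtain ⟨W, hRW, hgW⟩ :=
    LocalSubring.exists_le_valuationSubring_of_isIntegrallyClosedIn (R := .range _) hgR
  obtain ⟨V, hWV, hVW⟩ := W.exists_map_le_comap_eq φ
  refine hgW (hVW ▸ ValuationSubring.mem_comap.mpr (hg V ?_))
  rw [LocalSubring.range_comp]
  exact (LocalSubring.map_mono φ hRW).trans hWV

theorem _root_.exists_units_algebraMap_eq_iff {R S : Type*} [CommRing R] [CommRing S]
    [Algebra R S] (hinj : Function.Injective (algebraMap R S)) (u : Sˣ) :
    (∃ a : Rˣ, algebraMap R S a = u) ↔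
      (u : S) ∈ (algebraMap R S).range ∧ ((u⁻¹ : Sˣ) : S) ∈ (algebraMap R S).range := by
  constructor
  · rintro ⟨a, ha⟩
    have hau : Units.map (algebraMap R S).toMonoidHom a = u := Units.ext ha
    exact ⟨⟨a, ha⟩, ⟨↑a⁻¹, by rw [← hau, Units.coe_map_inv]; rfl⟩⟩
  · rintro ⟨⟨a, ha⟩, ⟨b, hb⟩⟩
    have hab : a * b = 1 := hinj (by simp [ha, hb])
    exact ⟨⟨a, b, hab, mul_comm b a ▸ hab⟩, ha⟩

lemma ffMap_eq (f : Y ⟶ X) (hg : f.base (genericPoint Y) = genericPoint X) :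
    ffMap f hg = X.presheaf.stalkSpecializes (Inseparable.of_eq hg).specializes ≫
      f.stalkMap (genericPoint Y) :=
  rfl

lemma ffMap_algebraMap_stalk (f : Y ⟶ X) (hg : f.base (genericPoint Y) = genericPoint X) (y : Y)
    (a : X.presheaf.stalk (f.base y)) :
    ffMap f hg (algebraMap _ X.functionField a) =
      algebraMap _ Y.functionField (f.stalkMap y a) := by
  change (X.presheaf.stalkSpecializes _ ≫ ffMap f hg) a =
    (f.stalkMap y ≫ Y.presheaf.stalkSpecializes _) a
  rw [ffMap_eq, ← Category.assoc, TopCat.Presheaf.stalkSpecializes_comp,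
    Scheme.Hom.stalkSpecializes_stalkMap]

lemma fromSpecStalk_genericPoint_comp (f : Y ⟶ X) (hg : f.base (genericPoint Y) = genericPoint X)
    {x : X} {R : CommRingCat} (ρ : X.presheaf.stalk x ⟶ R) (ι : R ⟶ Y.functionField)
    (h : ρ ≫ ι = X.presheaf.stalkSpecializes ((genericPoint_spec X).specializes trivial) ≫
      ffMap f hg) :
    Y.fromSpecStalk (genericPoint Y) ≫ f = Spec.map ι ≫ Spec.map ρ ≫ X.fromSpecStalk x := by
  rw [← Category.assoc, ← Spec.map_comp, h, Spec.map_comp, Category.assoc,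
    Scheme.SpecMap_stalkSpecializes_fromSpecStalk, ffMap_eq, Spec.map_comp, Category.assoc,
    Scheme.SpecMap_stalkSpecializes_fromSpecStalk,
    Scheme.SpecMap_stalkMap_fromSpecStalk]

open IsLocalRing in
lemma exists_range_algebraMap_stalk_le [IsIntegral Y] (f : Y ⟶ X) [UniversallyClosed f]
    (hg : f.base (genericPoint Y) = genericPoint X) (x : X) (V : ValuationSubring Y.functionField)
    (hV : LocalSubring.range ((ffMap f hg).hom.comp
      (algebraMap (X.presheaf.stalk x) X.functionField)) ≤ V.toLocalSubring) :
    ∃ y : Y, f.base y = x ∧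
      (algebraMap (Y.presheaf.stalk y) Y.functionField).range ≤ V.toSubring := by
  set ψ := (ffMap f hg).hom.comp (algebraMap (X.presheaf.stalk x) X.functionField)
  let ρ : X.presheaf.stalk x ⟶ CommRingCat.of V :=
    CommRingCat.ofHom (ψ.codRestrict V.toSubring fun a ↦ hV.1 ⟨a, rfl⟩)
  have : IsLocalHom ρ.hom :=
    @RingHom.isLocalHom_comp _ _ _ _ _ _ _ _ hV.2 (.of_surjective _ ψ.rangeRestrict_surjective)
  have : IsLocalRing (CommRingCat.of V) := inferInstanceAs (IsLocalRing V)
  have hcomm := fromSpecStalk_genericPoint_comp f hg ρ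
    (CommRingCat.ofHom (algebraMap V Y.functionField))
    (CommRingCat.hom_ext (RingHom.ext fun _ ↦ rfl))
  obtain ⟨l, hl₁, hl₂⟩ := ((UniversallyClosed.eq_valuativeCriterion.le _ _ f ‹_›).1
    { R := V, K := Y.functionField, i₁ := _, i₂ := _, commSq := ⟨hcomm⟩ }).exists_lift
  refine ⟨l.base (closedPoint (CommRingCat.of V)), ?_, ?_⟩
  · have hρx : (Spec.map ρ ≫ X.fromSpecStalk x) (closedPoint (CommRingCat.of V)) = x :=
      (Scheme.Hom.comp_apply ..).trans (congr(X.fromSpecStalk x $(Spec_closedPoint (f := ρ))).trans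
        Scheme.fromSpecStalk_closedPoint)
    exact congr($hl₂ (closedPoint (CommRingCat.of V))).trans hρx
  · have hτ : Scheme.stalkClosedPointTo l ≫ CommRingCat.ofHom V.subtype =
        Y.presheaf.stalkSpecializes ((genericPoint_spec Y).specializes trivial) := by
      rw [← Spec.map_inj, ← cancel_mono (Y.fromSpecStalk _), Spec.map_comp, Category.assoc,
        Scheme.Spec_stalkClosedPointTo_fromSpecStalk,
        Scheme.SpecMap_stalkSpecializes_fromSpecStalk]
      exact hl₁
    rintro _ ⟨c, rfl⟩
    have hc : algebraMap _ Y.functionField c = V.subtype (Scheme.stalkClosedPointTo l c) :=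
      congr($hτ.symm c)
    exact hc ▸ (Scheme.stalkClosedPointTo l c).2

lemma mem_range_algebraMap_stalk_of_forall_fiber [IsIntegral X] [IsIntegral Y] (f : Y ⟶ X)
    [UniversallyClosed f] (hg : f.base (genericPoint Y) = genericPoint X) {x : X}
    [IsIntegrallyClosed (X.presheaf.stalk x)] {g : X.functionField}
    (h : ∀ y : Y, f.base y = x →
      ffMap f hg g ∈ (algebraMap (Y.presheaf.stalk y) Y.functionField).range) :
    g ∈ (algebraMap (X.presheaf.stalk x) X.functionField).range :=
  mem_range_algebraMap_of_forall_valuationSubring (ffMap f hg).hom fun V hV ↦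
    have ⟨y, hyx, hyV⟩ := exists_range_algebraMap_stalk_le f hg x V hV
    hyV (h y hyx)

lemma isUnitAt_ffMap (f : Y ⟶ X) (hg : f.base (genericPoint Y) = genericPoint X) {y : Y}
    {g : X.functionField} (h : IsUnitAt X (f.base y) g) : IsUnitAt Y y (ffMap f hg g) := by
  obtain ⟨u, rfl⟩ := h
  exact ⟨Units.map (f.stalkMap y).hom.toMonoidHom u, (ffMap_algebraMap_stalk f hg y u).symm⟩

lemma isUnitAt_of_forall_fiber [IsIntegral X] [IsIntegral Y] (f : Y ⟶ X) [UniversallyClosed f]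
    (hg : f.base (genericPoint Y) = genericPoint X) {x : X}
    [IsIntegrallyClosed (X.presheaf.stalk x)] (u : X.functionFieldˣ)
    (h : ∀ y : Y, f.base y = x → IsUnitAt Y y (ffMap f hg u)) : IsUnitAt X x u := by
  have hY (y : Y) (hy : f.base y = x) := (exists_units_algebraMap_eq_iff
    (IsFractionRing.injective _ _) (Units.map (ffMap f hg).hom.toMonoidHom u)).mp (h y hy)
  refine (exists_units_algebraMap_eq_iff (IsFractionRing.injective _ _) u).mpr
    ⟨mem_range_algebraMap_stalk_of_forall_fiber f hg fun y hy ↦ (hY y hy).1,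
      mem_range_algebraMap_stalk_of_forall_fiber f hg fun y hy ↦ ?_⟩
  simpa [Units.coe_map_inv] using (hY y hy).2

theorem statement4_general [IsIntegral X] [IsIntegral Y]
    (hnormal : ∀ x : X, IsIntegrallyClosed (X.presheaf.stalk x))
    (f : Y ⟶ X) [IsProper f]
    (hg : f.base (genericPoint Y) = genericPoint X)
    (D : CartierDiv X) :
    D.IsTrivial ↔ PullbackIsTrivial f hg D := by
  refine ⟨fun hD y ↦ isUnitAt_ffMap f hg (hD (f.base y)), fun hD x ↦ ?_⟩
  have := hnormal x
  exact isUnitAt_of_forall_fiber f hg (D.eqn x) fun y hy ↦ hy ▸ hD y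

theorem statement4 [IsIntegral X] [IsIntegral Y]
    (hnormal : ∀ x : X, IsIntegrallyClosed (X.presheaf.stalk x))
    (f : Y ⟶ X) [IsProper f] (hsurj : Function.Surjective f.base)
    (hg : f.base (genericPoint Y) = genericPoint X)
    (D : CartierDiv X) :
    D.IsTrivial ↔ PullbackIsTrivial f hg D :=
  statement4_general hnormal f hg D

end

end Statement4
end

section
/- Let T̄ be a scheme with two effective Cartier divisors T⁺, T⁻, let F = T⁺ ×_{T̄} T⁻ be their scheme-theoretic intersection, let π : Bl_F(T̄) → T̄ be the blow-up along F with exceptional divisor E = π^{−1}(F). Then T̃⁺ := π*T⁺ − E and T̃⁻ := π*T⁻ − E are effective Cartier divisors with disjoint supports: |T̃⁺| ∩ |T̃⁻| = ∅. -/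
/-!
On the blow-up the exceptional divisor is cut out by the ideal of `F`, so locally
`(e) = (e a⁺) + (e a⁻)` with `e` regular. Cancelling `e` from `e = x e a⁺ + y e a⁻` gives
`x a⁺ + y a⁻ = 1`, and coprime local equations have disjoint zero loci.
-/

open PrimeSpectrum

section

variable {R : Type*} [CommRing R]

theorem isCoprime_of_mem_span_mul_pair {e a b : R} (he : e ∈ nonZeroDivisors R)
    (h : e ∈ Ideal.span {e * a, e * b}) : IsCoprime a b := by
  obtain ⟨x, y, hxy⟩ := Ideal.mem_span_pair.mp h
  refine ⟨x, y, sub_eq_zero.mp (he.2 _ ?_)⟩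
  linear_combination hxy

theorem IsCoprime.zeroLocus_inter_eq_empty {a b : R} (h : IsCoprime a b) :
    zeroLocus {a} ∩ zeroLocus {b} = ∅ := by
  rw [← zeroLocus_union, Set.singleton_union, ← zeroLocus_span, zeroLocus_empty_iff_eq_top,
    Ideal.span_insert, ← Ideal.isCoprime_iff_sup_eq]
  exact (Ideal.isCoprime_span_singleton_iff a b).mpr h

end

theorem statement6 {R : Type*} [CommRing R] (tp tm e ap am : R)
    (he : e ∈ nonZeroDivisors R)
    (h1 : tp = e * ap) (h2 : tm = e * am)
    (hE : Ideal.span {e} = Ideal.span {tp} + Ideal.span {tm}) :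
    PrimeSpectrum.zeroLocus {ap} ∩ PrimeSpectrum.zeroLocus {am} = ∅ := by
  subst h1 h2
  have he_mem : e ∈ Ideal.span {e * ap, e * am} := by
    rw [Ideal.span_insert, ← Submodule.add_eq_sup, ← hE]
    exact Ideal.mem_span_singleton_self e
  exact (isCoprime_of_mem_span_mul_pair he he_mem).zeroLocus_inter_eq_empty
end

section
/- Let f : X → S and g : Y → S be morphisms of schemes, D an effective Cartier divisor on S, and suppose both f and g satisfy the condition that no irreducible component of the source maps into |D|. If g factors through f via a proper surjective morphism h : Y → X (g = f ∘ h), then the strict transforms along the blow-up of S at any closed subscheme Z with f^{−1}(Z), g^{−1}(Z) containing no component, satisfy: the induced morphism between strict transforms Ỹ → X̃ is proper and surjective. -/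
open AlgebraicGeometry CategoryTheory TopologicalSpace

/-!
Properness of `p` follows from properness of `p ≫ a = bm ≫ h` because `a` is separated.
For surjectivity, `p ≫ a` is surjective and `a` is injective over `U`, so every point of
`a⁻¹ U` lies in the image of `p`. That image is closed, as `p` is proper, and contains the
dense set `a⁻¹ U`, hence is everything.
-/

lemma Set.preimage_subset_range_of_surjective_comp_of_injOn {α β γ : Type*}
    {p : α → β} {a : β → γ} (hpa : Function.Surjective (a ∘ p)) {U : Set γ}
    (hinj : Set.InjOn a (a ⁻¹' U)) : a ⁻¹' U ⊆ Set.range p := by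
  intro x hx
  obtain ⟨z, hz⟩ := hpa (a x)
  have hzU : p z ∈ a ⁻¹' U := by
    simp only [Set.mem_preimage, Function.comp_apply] at hz ⊢
    exact hz ▸ hx
  exact ⟨z, hinj hzU hx hz⟩

lemma IsClosedMap.surjective_of_dense_subset_range {α β : Type*} [TopologicalSpace α]
    [TopologicalSpace β] {p : α → β} (hp : IsClosedMap p) {s : Set β} (hs : Dense s)
    (hsub : s ⊆ Set.range p) : Function.Surjective p := by
  have hclosed : IsClosed (Set.range p) := by simpa using hp _ isClosed_univ
  rw [← Set.range_eq_univ, ← hclosed.closure_eq]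
  exact (hs.mono hsub).closure_eq

theorem statement8_general {Yt Xt X Y : Scheme} (p : Yt ⟶ Xt) (a : Xt ⟶ X)
    (bm : Yt ⟶ Y) (h : Y ⟶ X)
    (hsq : p ≫ a = bm ≫ h)
    [IsProper bm] [IsProper h] [IsSeparated a]
    (hbsurj : Function.Surjective bm.base) (hhsurj : Function.Surjective h.base)
    (U : X.Opens)
    (hinj : Set.InjOn a.base (a.base ⁻¹' (U : Set X)))
    (hdense : Dense (a.base ⁻¹' (U : Set X))) :
    IsProper p ∧ Function.Surjective p.base := by
  have : IsProper (p ≫ a) := hsq ▸ inferInstance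
  have hp : IsProper p := .of_comp p a
  have hpa : Function.Surjective (a.base ∘ p.base) := by
    have hcomp : a.base ∘ p.base = h.base ∘ bm.base := by
      ext z
      exact congrArg (fun m : Yt ⟶ X => m.base z) hsq
    exact hcomp ▸ hhsurj.comp hbsurj
  exact ⟨hp, p.isClosedMap.surjective_of_dense_subset_range hdense
    (Set.preimage_subset_range_of_surjective_comp_of_injOn hpa hinj)⟩

theorem statement8 {Yt Xt X Y : Scheme} (p : Yt ⟶ Xt) (a : Xt ⟶ X)
    (bm : Yt ⟶ Y) (h : Y ⟶ X)
    (hsq : p ≫ a = bm ≫ h)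
    [IsProper bm] [IsProper h] [IsProper a] [IsSeparated a]
    (hbsurj : Function.Surjective bm.base) (hhsurj : Function.Surjective h.base)
    (U : X.Opens) (hU : Dense (U : Set X))
    (hinj : Set.InjOn a.base (a.base ⁻¹' (U : Set X)))
    (hdense : Dense (a.base ⁻¹' (U : Set X))) :
    IsProper p ∧ Function.Surjective p.base :=
  statement8_general p a bm h hsq hbsurj hhsurj U hinj hdense
end
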